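/- arXiv:2601.09564 — 2 statements merged into one kernel-verified Lean document; each statement's English description precedes it below -/
import Mathlib

section
/- For all real τ ≥ −1.3 and all δ ≥ 0, the Gaussian Mills ratio satisfies R(τ) ≥ R(τ + δ) ≥ R(τ)·exp(−1.5·δ). -/
open MeasureTheory Real Set

/-- The standard Gaussian density `φ(x) = (1/√(2π))·exp(−x²/2)`. -/
noncomputable def gaussPDF (x : ℝ) : ℝ := (Real.sqrt (2 * Real.pi))⁻¹ * Real.exp (-x ^ 2 / 2)

/-- The Gaussian Q-function `Q(τ) = ∫_τ^∞ φ(x) dx`. -/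
noncomputable def gaussQ (τ : ℝ) : ℝ := ∫ x in Set.Ioi τ, gaussPDF x

/-- The Gaussian Mills ratio `R(τ) = Q(τ)/φ(τ)`. -/
noncomputable def millsR (τ : ℝ) : ℝ := gaussQ τ / gaussPDF τ


/-!
`R` is decreasing because `R' = τR - 1` and `τQ(τ) ≤ φ(τ)` (integrate `τφ ≤ xφ(x) = -φ'(x)`
over `x > τ`). For the lower bound it suffices that `(τ + c)R(τ) ≥ 1` with `c = 1.5` on
`[-1.3, ∞)`, i.e. that `G(τ) = (τ + c)Q(τ) - φ(τ)` is nonnegative there. Since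
`G' = (R - c)φ` and `R` decreases, `G` first increases and then decreases towards its limit
`0` at `∞`, so `G ≥ 0` on `[τ₀, ∞)` as soon as `G(τ₀) ≥ 0`; at `τ₀ = -1.3` this is a
numerical check. Then `R(τ)·exp(cτ)` is increasing on `[-1.3, ∞)`.
-/

open Filter Topology

lemma gaussPDF_eq_gaussianPDFReal : gaussPDF = ProbabilityTheory.gaussianPDFReal 0 1 := by
  ext x
  simp [gaussPDF, ProbabilityTheory.gaussianPDFReal]

lemma gaussPDF_pos (x : ℝ) : 0 < gaussPDF x := by
  unfold gaussPDF
  positivity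

lemma gaussPDF_neg (x : ℝ) : gaussPDF (-x) = gaussPDF x := by
  simp [gaussPDF]

lemma continuous_gaussPDF : Continuous gaussPDF := by
  unfold gaussPDF
  fun_prop

lemma integrable_gaussPDF : Integrable gaussPDF :=
  gaussPDF_eq_gaussianPDFReal ▸ ProbabilityTheory.integrable_gaussianPDFReal 0 1

lemma integral_gaussPDF : ∫ x, gaussPDF x = 1 :=
  gaussPDF_eq_gaussianPDFReal ▸ ProbabilityTheory.integral_gaussianPDFReal_eq_one 0 one_ne_zero

lemma hasDerivAt_gaussPDF (x : ℝ) : HasDerivAt gaussPDF (-x * gaussPDF x) x := by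
  refine (((hasDerivAt_pow 2 x).neg.div_const 2).exp.const_mul (√(2 * π))⁻¹).congr_deriv ?_
  simp only [gaussPDF, Pi.neg_apply]
  push_cast
  ring

lemma tendsto_gaussPDF_atTop : Tendsto gaussPDF atTop (𝓝 0) := by
  have h : Tendsto (fun x : ℝ => -x ^ 2 / 2) atTop atBot :=
    (tendsto_neg_atTop_atBot.comp (tendsto_pow_atTop two_ne_zero)).atBot_div_const two_pos
  have := (tendsto_exp_atBot.comp h).const_mul (√(2 * π))⁻¹
  rwa [mul_zero] at this

lemma gaussQ_pos (t : ℝ) : 0 < gaussQ t := by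
  unfold gaussQ
  rw [setIntegral_pos_iff_support_of_nonneg_ae (.of_forall fun x => (gaussPDF_pos x).le)
    integrable_gaussPDF.integrableOn]
  simp [Function.support_eq_univ fun x => (gaussPDF_pos x).ne']

lemma gaussQ_neg (t : ℝ) : gaussQ (-t) = 1 - gaussQ t := by
  have hIic : ∫ x in Iic t, gaussPDF x = gaussQ (-t) := by
    rw [gaussQ, ← integral_comp_neg_Iic]
    simp only [gaussPDF_neg]
  rw [← integral_gaussPDF, ← intervalIntegral.integral_Iic_add_Ioi integrable_gaussPDF.integrableOn
    integrable_gaussPDF.integrableOn, hIic, gaussQ, gaussQ, add_sub_cancel_right]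

lemma gaussQ_eq_sub_intervalIntegral (t : ℝ) :
    gaussQ t = gaussQ 0 - ∫ x in (0 : ℝ)..t, gaussPDF x := by
  rw [← intervalIntegral.integral_Ioi_sub_Ioi' integrable_gaussPDF.integrableOn
    integrable_gaussPDF.integrableOn, gaussQ, gaussQ, sub_sub_cancel]

lemma hasDerivAt_gaussQ (t : ℝ) : HasDerivAt gaussQ (-gaussPDF t) t := by
  rw [funext gaussQ_eq_sub_intervalIntegral]
  exact ((continuous_gaussPDF.integral_hasStrictDerivAt 0 t).hasDerivAt).const_sub _

lemma mul_gaussQ_le_gaussPDF {t : ℝ} (ht : 0 ≤ t) : t * gaussQ t ≤ gaussPDF t := by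
  have hderiv : ∀ x ∈ Ici t, HasDerivAt (fun y => -gaussPDF y) (x * gaussPDF x) x :=
    fun x _ => (hasDerivAt_gaussPDF x).neg.congr_deriv (by ring)
  have hnonneg : ∀ x ∈ Ioi t, 0 ≤ x * gaussPDF x :=
    fun x hx => mul_nonneg (ht.trans hx.le) (gaussPDF_pos x).le
  have hlim : Tendsto (fun y => -gaussPDF y) atTop (𝓝 0) := by
    simpa using tendsto_gaussPDF_atTop.neg
  calc t * gaussQ t = ∫ x in Ioi t, t * gaussPDF x := (integral_const_mul t _).symm
    _ ≤ ∫ x in Ioi t, x * gaussPDF x :=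
      setIntegral_mono_on (integrable_gaussPDF.integrableOn.const_mul t)
        (integrableOn_Ioi_deriv_of_nonneg' hderiv hnonneg hlim) measurableSet_Ioi
        fun x hx => mul_le_mul_of_nonneg_right hx.le (gaussPDF_pos x).le
    _ = gaussPDF t := by simpa using integral_Ioi_of_hasDerivAt_of_nonneg' hderiv hnonneg hlim

lemma millsR_pos (t : ℝ) : 0 < millsR t :=
  div_pos (gaussQ_pos t) (gaussPDF_pos t)

lemma gaussQ_eq_millsR_mul (t : ℝ) : gaussQ t = millsR t * gaussPDF t :=
  (div_mul_cancel₀ _ (gaussPDF_pos t).ne').symm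

lemma hasDerivAt_millsR (t : ℝ) : HasDerivAt millsR (t * millsR t - 1) t := by
  refine ((hasDerivAt_gaussQ t).div (hasDerivAt_gaussPDF t) (gaussPDF_pos t).ne').congr_deriv ?_
  have := (gaussPDF_pos t).ne'
  rw [millsR]
  field_simp
  ring

lemma mul_millsR_le_one (t : ℝ) : t * millsR t ≤ 1 := by
  rcases le_or_gt t 0 with ht | ht
  · nlinarith [millsR_pos t]
  · rw [millsR, mul_div_assoc', div_le_one (gaussPDF_pos t)]
    exact mul_gaussQ_le_gaussPDF ht.le

lemma millsR_antitone : Antitone millsR :=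
  antitone_of_deriv_nonpos (fun t => (hasDerivAt_millsR t).differentiableAt) fun t => by
    rw [(hasDerivAt_millsR t).deriv]
    linarith [mul_millsR_le_one t]

/-- `0 ≤ millsGap c t` means `(t + c)R(t) ≥ 1`, i.e. `(d/dt) ln R(t) = t - 1/R(t) ≥ -c`. -/
noncomputable def millsGap (c t : ℝ) : ℝ := (t + c) * gaussQ t - gaussPDF t

lemma hasDerivAt_millsGap (c t : ℝ) :
    HasDerivAt (millsGap c) ((millsR t - c) * gaussPDF t) t := by
  refine ((((hasDerivAt_id t).add_const c).mul (hasDerivAt_gaussQ t)).sub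
    (hasDerivAt_gaussPDF t)).congr_deriv ?_
  rw [id, gaussQ_eq_millsR_mul]
  ring

lemma tendsto_millsGap_atTop (c : ℝ) : Tendsto (millsGap c) atTop (𝓝 0) := by
  have htQ : Tendsto (fun t => t * gaussQ t) atTop (𝓝 0) :=
    squeeze_zero' ((eventually_ge_atTop 0).mono fun t ht => mul_nonneg ht (gaussQ_pos t).le)
      ((eventually_ge_atTop 0).mono fun t ht => mul_gaussQ_le_gaussPDF ht) tendsto_gaussPDF_atTop
  have hQ : Tendsto gaussQ atTop (𝓝 0) :=
    squeeze_zero' (.of_forall fun t => (gaussQ_pos t).le)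
      ((eventually_ge_atTop 1).mono fun t ht => le_mul_of_one_le_left (gaussQ_pos t).le ht) htQ
  have hG := (htQ.add (hQ.const_mul c)).sub tendsto_gaussPDF_atTop
  rw [mul_zero, add_zero, sub_zero] at hG
  exact hG.congr fun t => by rw [millsGap]; ring

lemma millsGap_nonneg_of_le {c t₀ t : ℝ} (h₀ : 0 ≤ millsGap c t₀) (ht : t₀ ≤ t) :
    0 ≤ millsGap c t := by
  have hdiff : Differentiable ℝ (millsGap c) :=
    fun s => (hasDerivAt_millsGap c s).differentiableAt
  rcases le_or_gt (millsR t) c with hR | hR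
  · have hanti : AntitoneOn (millsGap c) (Ici t) := by
      refine antitoneOn_of_deriv_nonpos (convex_Ici t) hdiff.continuous.continuousOn
        hdiff.differentiableOn fun s hs => ?_
      rw [interior_Ici] at hs
      rw [(hasDerivAt_millsGap c s).deriv]
      exact mul_nonpos_of_nonpos_of_nonneg (by linarith [millsR_antitone hs.le])
        (gaussPDF_pos s).le
    exact le_of_tendsto (tendsto_millsGap_atTop c)
      ((eventually_ge_atTop t).mono fun s hs => hanti self_mem_Ici hs hs)
  · have hmono : MonotoneOn (millsGap c) (Icc t₀ t) := by
      refine monotoneOn_of_deriv_nonneg (convex_Icc t₀ t) hdiff.continuous.continuousOn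
        hdiff.differentiableOn fun s hs => ?_
      rw [interior_Icc] at hs
      rw [(hasDerivAt_millsGap c s).deriv]
      exact mul_nonneg (by linarith [millsR_antitone hs.2.le]) (gaussPDF_pos s).le
    exact h₀.trans (hmono (left_mem_Icc.2 ht) (right_mem_Icc.2 ht) ht)

lemma one_le_add_mul_millsR {c t : ℝ} (h : 0 ≤ millsGap c t) : 1 ≤ (t + c) * millsR t := by
  rw [millsR, mul_div_assoc', one_le_div (gaussPDF_pos t)]
  rw [millsGap] at h
  linarith

lemma hasDerivAt_millsR_mul_exp (c t : ℝ) :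
    HasDerivAt (fun u => millsR u * exp (c * u)) (((t + c) * millsR t - 1) * exp (c * t)) t := by
  refine ((hasDerivAt_millsR t).mul ((hasDerivAt_id t).const_mul c).exp).congr_deriv ?_
  rw [id]
  ring

lemma millsR_mul_exp_le {c t₀ τ δ : ℝ} (h₀ : 0 ≤ millsGap c t₀) (hτ : t₀ ≤ τ) (hδ : 0 ≤ δ) :
    millsR τ * exp (-c * δ) ≤ millsR (τ + δ) := by
  set H := fun u => millsR u * exp (c * u) with hH
  have hdiff : Differentiable ℝ H := fun s => (hasDerivAt_millsR_mul_exp c s).differentiableAt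
  have hmono : MonotoneOn H (Ici t₀) := by
    refine monotoneOn_of_deriv_nonneg (convex_Ici t₀) hdiff.continuous.continuousOn
      hdiff.differentiableOn fun s hs => ?_
    rw [interior_Ici] at hs
    rw [(hasDerivAt_millsR_mul_exp c s).deriv]
    have := one_le_add_mul_millsR (millsGap_nonneg_of_le h₀ hs.le)
    exact mul_nonneg (by linarith) (exp_pos _).le
  have hτδ : τ ≤ τ + δ := le_add_of_nonneg_right hδ
  calc millsR τ * exp (-c * δ) = H τ * exp (-(c * (τ + δ))) := by
        rw [hH, mul_assoc, ← exp_add]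
        ring_nf
    _ ≤ H (τ + δ) * exp (-(c * (τ + δ))) := by
        gcongr
        exact hmono hτ (hτ.trans hτδ) hτδ
    _ = millsR (τ + δ) := by
        rw [hH, mul_assoc, ← exp_add, add_neg_cancel, exp_zero, mul_one]

lemma gaussPDF_one_point_three_le : gaussPDF 1.3 ≤ 13 / 75 := by
  have hexp : (2.3238 : ℝ) ≤ exp (169 / 200) := by
    refine le_trans ?_ (sum_le_exp_of_nonneg (by norm_num) 5)
    norm_num [Finset.sum_range_succ, Nat.factorial]
  have hsqrt : (2.506 : ℝ) ≤ √(2 * π) := le_sqrt_of_sq_le (by nlinarith [pi_gt_d6])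
  calc gaussPDF 1.3 = (√(2 * π))⁻¹ * (exp (169 / 200))⁻¹ := by
        rw [gaussPDF, ← exp_neg]
        norm_num
    _ ≤ 2.506⁻¹ * 2.3238⁻¹ := by gcongr
    _ ≤ 13 / 75 := by norm_num

lemma millsGap_nonneg_neg_one_point_three : 0 ≤ millsGap 1.5 (-1.3) := by
  have hmills := mul_gaussQ_le_gaussPDF (by norm_num : (0 : ℝ) ≤ 1.3)
  have hφ := gaussPDF_one_point_three_le
  rw [millsGap, gaussQ_neg, gaussPDF_neg]
  linarith

/-- For all real `τ ≥ −1.3` and all `δ ≥ 0`,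
`R(τ) ≥ R(τ + δ) ≥ R(τ)·exp(−1.5·δ)`. -/
theorem mills_ratio_multiplicative_bound (τ δ : ℝ) (hτ : -1.3 ≤ τ) (hδ : 0 ≤ δ) :
    millsR (τ + δ) ≤ millsR τ ∧ millsR τ * Real.exp (-1.5 * δ) ≤ millsR (τ + δ) :=
  ⟨millsR_antitone (le_add_of_nonneg_right hδ),
    millsR_mul_exp_le millsGap_nonneg_neg_one_point_three hτ hδ⟩
end

section
/- Let W, Q be σ-finite measures with W ≪ Q ≪ W (mutually absolutely continuous after restriction), η(1) < ∞, and finite masses as needed. Define β_{Q,W} and β_{W,Q} as the minimal randomized Type II errors in the two directions. Then β_{W,Q}(β_{Q,W}(ε)) = ε for all ε ∈ (0, W(Ω)), i.e., the two β functions are lower-semicontinuous inverses of each other on the nontrivial range. -/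
/-!
Write `W = f • Q` with `f = dW/dQ`. For a threshold `0 < c < ∞`, a test `T` that is `1` on
`{f < c}` and `0` on `{f > c}` minimises `c ∫ (1 - T) dQ + ∫ T dW` pointwise among all tests.
Hence `T` is optimal for `β_{Q,W}` at its own `W`-size, and `1 - T` is optimal for `β_{W,Q}` at
its own `Q`-size. Taking `c` a quantile of `f` under `W` and randomising on the tie set
`{f = c}` makes `∫ T dW = ε` exactly, so `β_{Q,W}(ε) = ∫ (1 - T) dQ` and applying `β_{W,Q}`
returns `∫ T dW = ε`. The cancellations need finite masses `W {f ≤ t}` and `Q {c ≤ f}`; both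
follow from `∫ min (f, 1) dQ < ∞`.
-/

open MeasureTheory Set ENNReal

variable {Ω : Type*} [MeasurableSpace Ω]

/-- `β(ε)`: the minimal Type II error over randomized tests `T : Ω → [0,1]` with
Type I error `∫ T dW ≤ ε`. -/
noncomputable def betaNP (Q W : Measure Ω) (ε : ℝ) : ℝ≥0∞ :=
  ⨅ (T : Ω → ℝ) (_ : Measurable T) (_ : ∀ x, T x ∈ Set.Icc (0 : ℝ) 1)
    (_ : ∫⁻ x, ENNReal.ofReal (T x) ∂W ≤ ENNReal.ofReal ε),
    ∫⁻ x, ENNReal.ofReal (1 - T x) ∂Q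

lemma ENNReal.ofReal_one_sub_add_ofReal {t : ℝ} (ht : t ∈ Icc (0 : ℝ) 1) :
    ENNReal.ofReal (1 - t) + ENNReal.ofReal t = 1 := by
  rw [← ENNReal.ofReal_add (by linarith [ht.2]) ht.1, sub_add_cancel, ENNReal.ofReal_one]

lemma ENNReal.exists_add_ofReal_mul_eq {a b e : ℝ≥0∞} (hb : b ≠ ∞) (hae : a ≤ e)
    (hea : e ≤ a + b) : ∃ γ ∈ Icc (0 : ℝ) 1, a + ENNReal.ofReal γ * b = e := by
  have hcont : Continuous fun γ : ℝ => a + ENNReal.ofReal γ * b :=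
    continuous_const.add ((ENNReal.continuous_mul_const hb).comp ENNReal.continuous_ofReal)
  simpa using intermediate_value_Icc zero_le_one hcont.continuousOn
    (show e ∈ Icc _ _ by simpa using And.intro hae hea)

/-- `t ↦ c (1 - t) + u t` is affine with slope `u - c`. -/
lemma ENNReal.mul_ofReal_one_sub_add_le {c u : ℝ≥0∞} {t s : ℝ} (ht : t ∈ Icc (0 : ℝ) 1)
    (hs : s ∈ Icc (0 : ℝ) 1) (ht_one : u < c → t = 1) (ht_zero : c < u → t = 0) :
    c * ENNReal.ofReal (1 - t) + u * ENNReal.ofReal t ≤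
      c * ENNReal.ofReal (1 - s) + u * ENNReal.ofReal s := by
  have split : ∀ {r : ℝ} (a : ℝ≥0∞), r ∈ Icc (0 : ℝ) 1 →
      a * ENNReal.ofReal (1 - r) + a * ENNReal.ofReal r = a := fun a hr => by
    rw [← mul_add, ENNReal.ofReal_one_sub_add_ofReal hr, mul_one]
  rcases lt_trichotomy u c with h | rfl | h
  · calc c * ENNReal.ofReal (1 - t) + u * ENNReal.ofReal t = u := by simp [ht_one h]
      _ = u * ENNReal.ofReal (1 - s) + u * ENNReal.ofReal s := (split u hs).symm
      _ ≤ _ := by gcongr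
  · rw [split u ht, split u hs]
  · calc c * ENNReal.ofReal (1 - t) + u * ENNReal.ofReal t = c := by simp [ht_zero h]
      _ = c * ENNReal.ofReal (1 - s) + c * ENNReal.ofReal s := (split c hs).symm
      _ ≤ _ := by gcongr

lemma exists_measure_lt_le_and_le_measure_le (μ : Measure Ω) {f : Ω → ℝ≥0∞}
    (hf : Measurable f) {ε : ℝ≥0∞} (hε : ε ≤ μ univ) (hfin : ∀ t ≠ ∞, μ {x | f x ≤ t} ≠ ∞) :
    ∃ c, μ {x | f x < c} ≤ ε ∧ ε ≤ μ {x | f x ≤ c} := by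
  obtain ⟨D, hD_countable, hD_dense⟩ := TopologicalSpace.exists_countable_dense ℝ≥0∞
  have hmono : Monotone fun t => {x | f x < t} := fun s t hst x hx => lt_of_lt_of_le hx hst
  set c := sInf {t | ε < μ {x | f x < t}}
  refine ⟨c, ?_, ?_⟩
  · have : Countable ↥(D ∩ Iio c) := (hD_countable.mono inter_subset_left).to_subtype
    have hunion : {x | f x < c} = ⋃ q : ↥(D ∩ Iio c), {x | f x < q} := by
      ext x
      simp only [mem_ofPred_eq, mem_iUnion, Subtype.exists, mem_inter_iff, mem_Iio]
      refine ⟨fun hx => ?_, fun ⟨q, ⟨_, hqc⟩, hxq⟩ => hxq.trans hqc⟩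
      obtain ⟨q, hqD, hxq, hqc⟩ := hD_dense.exists_between hx
      exact ⟨q, ⟨hqD, hqc⟩, hxq⟩
    have hdir : Directed (· ⊆ ·) fun q : ↥(D ∩ Iio c) => {x | f x < q} :=
      (hmono.comp (Subtype.mono_coe _)).directed_le
    rw [hunion, hdir.measure_iUnion]
    refine iSup_le fun q => le_of_not_gt fun hq => ?_
    exact (sInf_le (show q.1 ∈ {t | ε < μ {x | f x < t}} from hq)).not_gt q.2.2
  · rcases eq_or_ne c ∞ with hc | hc
    · simpa [hc] using hε
    have : Countable ↥(D ∩ Ioi c) := (hD_countable.mono inter_subset_left).to_subtype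
    have hinter : {x | f x ≤ c} = ⋂ q : ↥(D ∩ Ioi c), {x | f x < q} := by
      ext x
      simp only [mem_ofPred_eq, mem_iInter, Subtype.forall, mem_inter_iff, mem_Ioi]
      refine ⟨fun hx q ⟨_, hcq⟩ => hx.trans_lt hcq, fun h => not_lt.1 fun hcx => ?_⟩
      obtain ⟨q, hqD, hcq, hqx⟩ := hD_dense.exists_between hcx
      exact (h q ⟨hqD, hcq⟩).not_gt hqx
    obtain ⟨q₀, hq₀D, hcq₀, hq₀⟩ := hD_dense.exists_between (ENNReal.lt_add_right hc one_ne_zero)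
    have hdir : Directed (· ⊇ ·) fun q : ↥(D ∩ Ioi c) => {x | f x < q} :=
      (hmono.comp (Subtype.mono_coe _)).directed_ge
    have hfin₀ : μ {x | f x < q₀} ≠ ∞ :=
      ne_top_of_le_ne_top (hfin q₀ hq₀.ne_top) (measure_mono fun x (hx : f x < q₀) => hx.le)
    have hmeas : ∀ q : ↥(D ∩ Ioi c), NullMeasurableSet {x | f x < q} μ :=
      fun _ => (measurableSet_lt hf measurable_const).nullMeasurableSet
    rw [hinter, hdir.measure_iInter hmeas ⟨⟨q₀, hq₀D, hcq₀⟩, hfin₀⟩]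
    refine le_iInf fun q => ?_
    obtain ⟨s, hs, hsq⟩ := sInf_lt_iff.1 (show c < q from q.2.2)
    exact (hs.trans_le (measure_mono (hmono hsq.le))).le

section NeymanPearson

variable {Q : Measure Ω} {f : Ω → ℝ≥0∞} {c : ℝ≥0∞} {T : Ω → ℝ}

structure IsNeymanPearsonTest (f : Ω → ℝ≥0∞) (c : ℝ≥0∞) (T : Ω → ℝ) : Prop where
  measurable : Measurable T
  mem_Icc : ∀ x, T x ∈ Icc (0 : ℝ) 1
  eq_one_of_lt : ∀ x, f x < c → T x = 1
  eq_zero_of_gt : ∀ x, c < f x → T x = 0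

namespace IsNeymanPearsonTest

lemma lintegral_le (hT : IsNeymanPearsonTest f c T) (hf : Measurable f) {U : Ω → ℝ}
    (hU : Measurable U) (hU_mem : ∀ x, U x ∈ Icc (0 : ℝ) 1) :
    c * ∫⁻ x, ENNReal.ofReal (1 - T x) ∂Q + ∫⁻ x, ENNReal.ofReal (T x) ∂Q.withDensity f ≤
      c * ∫⁻ x, ENNReal.ofReal (1 - U x) ∂Q + ∫⁻ x, ENNReal.ofReal (U x) ∂Q.withDensity f := by
  have hcombine : ∀ {V : Ω → ℝ}, Measurable V →
      c * ∫⁻ x, ENNReal.ofReal (1 - V x) ∂Q + ∫⁻ x, ENNReal.ofReal (V x) ∂Q.withDensity f =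
        ∫⁻ x, c * ENNReal.ofReal (1 - V x) + f x * ENNReal.ofReal (V x) ∂Q := fun hV => by
    rw [lintegral_add_left ((hV.const_sub 1).ennreal_ofReal.const_mul c),
      lintegral_const_mul c (hV.const_sub 1).ennreal_ofReal,
      lintegral_withDensity_eq_lintegral_mul _ hf hV.ennreal_ofReal]
    rfl
  rw [hcombine hT.measurable, hcombine hU]
  exact lintegral_mono fun x => ENNReal.mul_ofReal_one_sub_add_le (hT.mem_Icc x) (hU_mem x)
    (hT.eq_one_of_lt x) (hT.eq_zero_of_gt x)

lemma betaNP_eq (hT : IsNeymanPearsonTest f c T) (hf : Measurable f) (hc₀ : c ≠ 0)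
    (hc : c ≠ ∞) {ε : ℝ} (hTε : ∫⁻ x, ENNReal.ofReal (T x) ∂Q.withDensity f = ENNReal.ofReal ε) :
    betaNP Q (Q.withDensity f) ε = ∫⁻ x, ENNReal.ofReal (1 - T x) ∂Q := by
  refine le_antisymm (iInf_le_of_le T <| iInf_le_of_le hT.measurable <|
    iInf_le_of_le hT.mem_Icc <| iInf_le_of_le hTε.le le_rfl) ?_
  simp only [betaNP, le_iInf_iff]
  intro U hU hU_mem hUε
  have h := (hT.lintegral_le (Q := Q) hf hU hU_mem).trans (add_le_add_right hUε _)
  rwa [hTε, ENNReal.add_le_add_iff_right ofReal_ne_top,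
    ENNReal.mul_le_mul_iff_right hc₀ hc] at h

lemma betaNP_swap_eq (hT : IsNeymanPearsonTest f c T) (hf : Measurable f) (hc : c ≠ ∞)
    (hb : ∫⁻ x, ENNReal.ofReal (1 - T x) ∂Q ≠ ∞) :
    betaNP (Q.withDensity f) Q (∫⁻ x, ENNReal.ofReal (1 - T x) ∂Q).toReal =
      ∫⁻ x, ENNReal.ofReal (T x) ∂Q.withDensity f := by
  refine le_antisymm ?_ ?_
  · refine iInf_le_of_le (fun x => 1 - T x) <| iInf_le_of_le (hT.measurable.const_sub 1) <|
      iInf_le_of_le (fun x => Icc.one_sub_mem (hT.mem_Icc x)) <|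
      iInf_le_of_le (ofReal_toReal hb).ge ?_
    simp only [_root_.sub_sub_cancel, le_rfl]
  simp only [betaNP, le_iInf_iff]
  intro U hU hU_mem hUb
  have h := hT.lintegral_le (Q := Q) hf (hU.const_sub 1) fun x => Icc.one_sub_mem (hU_mem x)
  simp only [_root_.sub_sub_cancel] at h
  have h' := h.trans (add_le_add_left (mul_le_mul_right (hUb.trans (ofReal_toReal hb).le) c) _)
  rwa [ENNReal.add_le_add_iff_left (mul_ne_top hc hb)] at h'

lemma lintegral_one_sub_le (hT : IsNeymanPearsonTest f c T) (hf : Measurable f) :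
    ∫⁻ x, ENNReal.ofReal (1 - T x) ∂Q ≤ Q {x | c ≤ f x} := by
  rw [← lintegral_indicator_one (measurableSet_le measurable_const hf)]
  refine lintegral_mono fun x => ?_
  by_cases hx : c ≤ f x
  · simpa [hx] using (hT.mem_Icc x).1
  · simp [hx, hT.eq_one_of_lt x (not_le.1 hx)]

end IsNeymanPearsonTest

end NeymanPearson

section NeymanPearsonTestConstruction

variable {f : Ω → ℝ≥0∞} {c : ℝ≥0∞} {γ : ℝ}

noncomputable def neymanPearsonTest (f : Ω → ℝ≥0∞) (c : ℝ≥0∞) (γ : ℝ) (x : Ω) : ℝ :=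
  if f x < c then 1 else if f x = c then γ else 0

lemma isNeymanPearsonTest_neymanPearsonTest (hf : Measurable f) (hγ : γ ∈ Icc (0 : ℝ) 1) :
    IsNeymanPearsonTest f c (neymanPearsonTest f c γ) where
  measurable := Measurable.ite (measurableSet_lt hf measurable_const) measurable_const <|
    Measurable.ite (measurableSet_eq_fun hf measurable_const) measurable_const measurable_const
  mem_Icc x := by unfold neymanPearsonTest; split_ifs <;> simp [hγ.1, hγ.2]
  eq_one_of_lt x hx := if_pos hx
  eq_zero_of_gt x hx := by simp [neymanPearsonTest, not_lt.2 hx.le, hx.ne']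

lemma lintegral_ofReal_neymanPearsonTest (μ : Measure Ω) (hf : Measurable f) :
    ∫⁻ x, ENNReal.ofReal (neymanPearsonTest f c γ x) ∂μ =
      μ {x | f x < c} + ENNReal.ofReal γ * μ {x | f x = c} := by
  have hlt : MeasurableSet {x | f x < c} := measurableSet_lt hf measurable_const
  have heq : MeasurableSet {x | f x = c} := measurableSet_eq_fun hf measurable_const
  have hsplit : ∀ x, ENNReal.ofReal (neymanPearsonTest f c γ x) =
      {x | f x < c}.indicator 1 x + {x | f x = c}.indicator (fun _ => ENNReal.ofReal γ) x := by
    intro x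
    by_cases h : f x < c
    · simp [neymanPearsonTest, h, h.ne]
    · by_cases h' : f x = c <;> simp [neymanPearsonTest, h, h']
  simp only [hsplit]
  rw [lintegral_add_left (measurable_one.indicator hlt), lintegral_indicator_one hlt,
    lintegral_indicator_const heq]

end NeymanPearsonTestConstruction

section LikelihoodRatio

variable {Q : Measure Ω} {f : Ω → ℝ≥0∞}

lemma withDensity_le_const_ne_top (hf : Measurable f) (h1 : ∫⁻ x, min (f x) 1 ∂Q ≠ ∞)
    {t : ℝ≥0∞} (ht : t ≠ ∞) : Q.withDensity f {x | f x ≤ t} ≠ ∞ := by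
  have hbound : ∀ x ∈ {x | f x ≤ t}, f x ≤ max t 1 * min (f x) 1 := by
    intro x hx
    rcases le_total (f x) 1 with h | h
    · rw [min_eq_left h]; exact le_mul_of_one_le_left' (le_max_right t 1)
    · rw [min_eq_right h, mul_one]; exact le_max_of_le_left hx
  rw [withDensity_apply _ (measurableSet_le hf measurable_const)]
  refine ne_top_of_le_ne_top (mul_ne_top (max_ne_top ht one_ne_top) h1) ?_
  calc ∫⁻ x in {x | f x ≤ t}, f x ∂Q ≤ ∫⁻ x in {x | f x ≤ t}, max t 1 * min (f x) 1 ∂Q :=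
        setLIntegral_mono ((hf.min measurable_const).const_mul _) hbound
    _ ≤ ∫⁻ x, max t 1 * min (f x) 1 ∂Q := setLIntegral_le_lintegral _ _
    _ = max t 1 * ∫⁻ x, min (f x) 1 ∂Q := lintegral_const_mul _ (hf.min measurable_const)

lemma measure_const_le_ne_top (hf : Measurable f) (h1 : ∫⁻ x, min (f x) 1 ∂Q ≠ ∞)
    {c : ℝ≥0∞} (hc : c ≠ 0) : Q {x | c ≤ f x} ≠ ∞ := by
  have hc1 : min c 1 ≠ 0 := (lt_min (pos_iff_ne_zero.2 hc) one_pos).ne'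
  refine ne_top_of_le_ne_top (div_ne_top h1 hc1) ?_
  calc Q {x | c ≤ f x} ≤ Q {x | min c 1 ≤ min (f x) 1} :=
        measure_mono fun x (hx : c ≤ f x) => min_le_min_right 1 hx
    _ ≤ (∫⁻ x, min (f x) 1 ∂Q) / min c 1 :=
        meas_ge_le_lintegral_div (hf.min measurable_const).aemeasurable hc1
          (ne_top_of_le_ne_top one_ne_top (min_le_right c 1))

end LikelihoodRatio

theorem betaNP_withDensity_inversion {Q : Measure Ω} {f : Ω → ℝ≥0∞} (hf : Measurable f)
    (hf_lt_top : ∀ᵐ x ∂Q, f x < ∞) (h1 : ∫⁻ x, min (f x) 1 ∂Q ≠ ∞) {ε : ℝ} (hε : 0 < ε)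
    (hεW : ENNReal.ofReal ε < Q.withDensity f univ) :
    betaNP (Q.withDensity f) Q (betaNP Q (Q.withDensity f) ε).toReal = ENNReal.ofReal ε := by
  set W := Q.withDensity f
  obtain ⟨c, hlt, hle⟩ := exists_measure_lt_le_and_le_measure_le W hf hεW.le
    fun t ht => withDensity_le_const_ne_top hf h1 ht
  have hc₀ : c ≠ 0 := by
    rintro rfl
    have hW0 : W {x | f x ≤ 0} = 0 := by
      rw [withDensity_apply_eq_zero hf]
      exact measure_mono_null (fun x hx => hx.1 (nonpos_iff_eq_zero.1 hx.2)) measure_empty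
    exact (ofReal_pos.2 hε).ne' (le_zero_iff.1 (hW0 ▸ hle))
  have hc : c ≠ ∞ := by
    rintro rfl
    have hWtop : W {x | f x < ∞} = W univ := measure_congr <| Filter.eventuallyEq_univ.2 <|
      (withDensity_absolutelyContinuous Q f).ae_le hf_lt_top
    exact (hεW.trans_le (hWtop ▸ hlt)).false
  have hsplit : W {x | f x ≤ c} = W {x | f x < c} + W {x | f x = c} := by
    simp_rw [le_iff_lt_or_eq, ofPred_or]
    exact measure_union (disjoint_left.2 fun x (h : f x < c) => h.ne)
      (measurableSet_eq_fun hf measurable_const)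
  have hD : W {x | f x = c} ≠ ∞ := ne_top_of_le_ne_top (withDensity_le_const_ne_top hf h1 hc)
    (measure_mono fun x (hx : f x = c) => hx.le)
  obtain ⟨γ, hγ, hγε⟩ := ENNReal.exists_add_ofReal_mul_eq hD hlt (hsplit ▸ hle)
  have hT := isNeymanPearsonTest_neymanPearsonTest (c := c) hf hγ
  have hTε : ∫⁻ x, ENNReal.ofReal (neymanPearsonTest f c γ x) ∂W = ENNReal.ofReal ε :=
    (lintegral_ofReal_neymanPearsonTest W hf).trans hγε
  have hb : ∫⁻ x, ENNReal.ofReal (1 - neymanPearsonTest f c γ x) ∂Q ≠ ∞ :=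
    ne_top_of_le_ne_top (measure_const_le_ne_top hf h1 hc₀) (hT.lintegral_one_sub_le hf)
  rw [hT.betaNP_eq hf hc₀ hc hTε, hT.betaNP_swap_eq hf hc hb, hTε]

theorem betaNP_inversion_general (Q W : Measure Ω)
    [SigmaFinite W] [SigmaFinite Q]
    (hWQ : W ≪ Q)
    (h1 : ∫⁻ x, min (W.rnDeriv Q x) 1 ∂Q ≠ ⊤) :
    ∀ ε : ℝ, 0 < ε → ENNReal.ofReal ε < W Set.univ →
      betaNP W Q ((betaNP Q W ε).toReal) = ENNReal.ofReal ε := by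
  intro ε hε hεW
  rw [← Measure.withDensity_rnDeriv_eq W Q hWQ] at hεW ⊢
  exact betaNP_withDensity_inversion (Measure.measurable_rnDeriv W Q)
    (Measure.rnDeriv_lt_top W Q) h1 hε hεW

/-- Inversion identity: for mutually absolutely continuous σ-finite `W, Q` with
`η(1) = ∫ min(dW/dQ, 1) dQ < ∞`, the two `β` functions are inverses of each other
on the nontrivial range: `β_{W,Q}(β_{Q,W}(ε)) = ε` for all `ε ∈ (0, W(Ω))`. -/
theorem betaNP_inversion (Q W : Measure Ω)
    [SigmaFinite W] [SigmaFinite Q]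
    (hWQ : W ≪ Q) (hQW : Q ≪ W)
    (h1 : ∫⁻ x, min (W.rnDeriv Q x) 1 ∂Q ≠ ⊤) :
    ∀ ε : ℝ, 0 < ε → ENNReal.ofReal ε < W Set.univ →
      betaNP W Q ((betaNP Q W ε).toReal) = ENNReal.ofReal ε :=
  betaNP_inversion_general Q W hWQ h1
end
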